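/- Let x be a real number that has a signed digit representation, and let l be a finite list of integers, each of which lies in {-1, 0, 1}. Then the real number x · (∑_{i=1}^{length l} l_i / 2^i), where l_i denotes the i-th element of l, has a signed digit representation. -/

import Mathlib

/-!
A real number has a signed digit representation exactly when it lies in `[-1, 1]`: the digit
series is dominated by `∑ 2⁻⁽ⁱ⁺¹⁾ = 1`, and conversely `y ∈ [-1, 1]` is obtained from a binary
expansion `∑ bᵢ 2⁻⁽ⁱ⁺¹⁾` of `(y + 1) / 2` with the digits `2 bᵢ - 1`. Since `[-1, 1]` is closed
under multiplication, and a finite list of signed digits is a signed digit representation padded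
with zeros, the product has one too.
-/

/-- A real number has a signed digit representation if it is the sum of a
series of digits in {-1, 0, 1} weighted by powers of 1/2. -/
def HasSDR (x : ℝ) : Prop :=
  ∃ d : ℕ → ℤ, (∀ i, d i = -1 ∨ d i = 0 ∨ d i = 1) ∧
    x = ∑' i : ℕ, (d i : ℝ) / 2 ^ (i + 1)

lemma hasSum_one_div_two_pow_succ : HasSum (fun i : ℕ => (1 : ℝ) / 2 ^ (i + 1)) 1 := by
  simpa only [pow_succ, div_div, mul_comm] using hasSum_geometric_two' 1

lemma abs_tsum_div_two_pow_succ_le_one {d : ℕ → ℝ} (hd : ∀ i, |d i| ≤ 1) :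
    |∑' i, d i / 2 ^ (i + 1)| ≤ 1 :=
  tsum_of_norm_bounded (f := fun i => d i / 2 ^ (i + 1)) hasSum_one_div_two_pow_succ fun i => by
    rw [Real.norm_eq_abs, abs_div, abs_pow, abs_two]
    exact div_le_div_of_nonneg_right (hd i) (by positivity)

lemma abs_intCast_le_one_of_signed_digit {a : ℤ} (ha : a = -1 ∨ a = 0 ∨ a = 1) :
    |(a : ℝ)| ≤ 1 := by
  rcases ha with rfl | rfl | rfl <;> norm_num

theorem HasSDR.abs_le_one {x : ℝ} (hx : HasSDR x) : |x| ≤ 1 := by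
  obtain ⟨d, hd, rfl⟩ := hx
  exact abs_tsum_div_two_pow_succ_le_one fun i => abs_intCast_le_one_of_signed_digit (hd i)

theorem hasSDR_of_abs_le_one {y : ℝ} (hy : |y| ≤ 1) : HasSDR y := by
  obtain ⟨hy₁, hy₂⟩ := abs_le.mp hy
  obtain ⟨b, -, hb⟩ := Real.ofDigits_SurjOn one_lt_two
    (show (y + 1) / 2 ∈ Set.Icc 0 1 from ⟨by linarith, by linarith⟩)
  refine ⟨fun i => 2 * (b i : ℤ) - 1, fun i => by have := (b i).isLt; dsimp only; omega, ?_⟩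
  have hsum : HasSum (fun i => 2 * Real.ofDigitsTerm b i - 1 / 2 ^ (i + 1))
      (2 * Real.ofDigits b - 1) :=
    (Real.summable_ofDigitsTerm.hasSum.mul_left 2).sub hasSum_one_div_two_pow_succ
  calc y = 2 * Real.ofDigits b - 1 := by rw [hb]; ring
    _ = _ := hsum.tsum_eq.symm
    _ = _ := tsum_congr fun i => by rw [Real.ofDigitsTerm]; push_cast; ring

theorem hasSDR_iff_abs_le_one {x : ℝ} : HasSDR x ↔ |x| ≤ 1 :=
  ⟨HasSDR.abs_le_one, hasSDR_of_abs_le_one⟩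

theorem HasSDR.mul {x y : ℝ} (hx : HasSDR x) (hy : HasSDR y) : HasSDR (x * y) := by
  rw [hasSDR_iff_abs_le_one, abs_mul] at *
  exact mul_le_one₀ hx (abs_nonneg y) hy

theorem hasSDR_sum_getD {l : List ℤ} (hl : ∀ a ∈ l, a = -1 ∨ a = 0 ∨ a = 1) :
    HasSDR (∑ i ∈ Finset.range l.length, (l.getD i 0 : ℝ) / 2 ^ (i + 1)) := by
  refine ⟨fun i => l.getD i 0, fun i => ?_, ?_⟩
  · dsimp only
    rcases lt_or_ge i l.length with hi | hi
    · rw [List.getD_eq_getElem l 0 hi]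
      exact hl _ (List.getElem_mem hi)
    · rw [List.getD_eq_default l 0 hi]
      exact Or.inr (Or.inl rfl)
  · refine (tsum_eq_sum fun i hi => ?_).symm
    rw [List.getD_eq_default l 0 (by simpa using hi)]
    simp

theorem sdr_mult_sum (x : ℝ) (hx : HasSDR x) (l : List ℤ)
    (hl : ∀ a ∈ l, a = -1 ∨ a = 0 ∨ a = 1) :
    HasSDR (x * ∑ i ∈ Finset.range l.length, (l.getD i 0 : ℝ) / 2 ^ (i + 1)) :=
  hx.mul (hasSDR_sum_getD hl)
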